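/- arXiv:2104.10724 — 9 statements merged into one kernel-verified Lean document; each statement's English description precedes it below -/
import Mathlib

section
/- Let (A, μ, α) be a multiplicative Hom-associative algebra and M a vector space with linear maps l: A⊗M→M, r: M⊗A→M, φ: M→M. Then (M, l, r, φ) is a bimodule of A if and only if the direct sum A⊕M carries a Hom-associative algebra structure (the semi-direct product) with product (x,u)·(y,v) = (x·y, l(x,u)+r(v,y)) and structure map (α,φ)(x,u)=(α(x),φ(u)). -/
section

variable {K A M : Type*} [Field K] [AddCommGroup A] [Module K A]
  [AddCommGroup M] [Module K M]

/-- Semi-direct product multiplication on `A × M`: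
`(x,u)·(y,v) = (x·y, l(x,u) + r(v,y))`. -/
def sdMul (μ : A →ₗ[K] A →ₗ[K] A) (l : A →ₗ[K] M →ₗ[K] M)
    (r : M →ₗ[K] A →ₗ[K] M) (p q : A × M) : A × M :=
  (μ p.1 q.1, l p.1 q.2 + r p.2 q.1)

/-- Structure map `(α,φ)(x,u) = (α(x), φ(u))` on `A × M`. -/
def sdMap (α : A →ₗ[K] A) (φ : M →ₗ[K] M) (p : A × M) : A × M :=
  (α p.1, φ p.2)

/-- `(M,l,r,φ)` is a bimodule over the multiplicative Hom-associative
algebra `(A,μ,α)` iff the semi-direct product on `A ⊕ M` is a (multiplicative)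
Hom-associative algebra structure. -/
theorem stmt_0 (μ : A →ₗ[K] A →ₗ[K] A) (α : A →ₗ[K] A)
    (l : A →ₗ[K] M →ₗ[K] M) (r : M →ₗ[K] A →ₗ[K] M) (φ : M →ₗ[K] M)
    (hassoc : ∀ a b c : A, μ (α a) (μ b c) = μ (μ a b) (α c))
    (hmult : ∀ a b : A, α (μ a b) = μ (α a) (α b)) :
    ((∀ x v, φ (l x v) = l (α x) (φ v)) ∧
     (∀ v x, φ (r v x) = r (φ v) (α x)) ∧
     (∀ x y v, l (μ x y) (φ v) = l (α x) (l y v)) ∧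
     (∀ v x y, r (φ v) (μ x y) = r (r v x) (α y)) ∧
     (∀ x v y, l (α x) (r v y) = r (l x v) (α y))) ↔
    ((∀ p q s : A × M,
        sdMul μ l r (sdMap α φ p) (sdMul μ l r q s) =
          sdMul μ l r (sdMul μ l r p q) (sdMap α φ s)) ∧
     (∀ p q : A × M,
        sdMap α φ (sdMul μ l r p q) =
          sdMul μ l r (sdMap α φ p) (sdMap α φ q))) := by
  constructor
  · rintro ⟨h1, h2, h3, h4, h5⟩
    constructor
    · rintro ⟨x, u⟩ ⟨y, v⟩ ⟨z, w⟩
      simp only [sdMul, sdMap, Prod.mk.injEq, map_add, LinearMap.add_apply]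
      refine ⟨hassoc x y z, ?_⟩
      rw [h3, h4, h5]
      abel
    · rintro ⟨x, u⟩ ⟨y, v⟩
      simp only [sdMul, sdMap, Prod.mk.injEq, map_add]
      exact ⟨hmult x y, by rw [h1, h2]⟩
  · rintro ⟨Hb, Hm⟩
    refine ⟨fun x v => ?_, fun v x => ?_, fun x y v => ?_, fun v x y => ?_, fun x v y => ?_⟩
    · have := congrArg Prod.snd (Hm (x, 0) (0, v))
      simpa [sdMul, sdMap] using this
    · have := congrArg Prod.snd (Hm (0, v) (x, 0))
      simpa [sdMul, sdMap] using this
    · have := congrArg Prod.snd (Hb (x, 0) (y, 0) (0, v))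
      simpa [sdMul, sdMap] using this.symm
    · have := congrArg Prod.snd (Hb (0, v) (x, 0) (y, 0))
      simpa [sdMul, sdMap] using this
    · have := congrArg Prod.snd (Hb (x, 0) (0, v) (y, 0))
      simpa [sdMul, sdMap] using this

end
end

section
/- A linear map T: M → A is an O-operator on a Hom-associative algebra A with respect to the bimodule M if and only if the graph Gr(T) = {(T(u), u) : u ∈ M} is a Hom-subalgebra of the semi-direct product Hom-associative algebra A ⊕ M. -/
section

variable {K A M : Type*} [Field K] [AddCommGroup A] [Module K A]
  [AddCommGroup M] [Module K M]

/-- `T : M → A` is an `𝒪`-operator iff its graph is a Hom-subalgebra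
of the semi-direct product `A ⊕ M`. -/
theorem stmt_1 (μ : A →ₗ[K] A →ₗ[K] A) (α : A →ₗ[K] A)
    (l : A →ₗ[K] M →ₗ[K] M) (r : M →ₗ[K] A →ₗ[K] M) (φ : M →ₗ[K] M)
    (hassoc : ∀ a b c : A, μ (α a) (μ b c) = μ (μ a b) (α c))
    (hmult : ∀ a b : A, α (μ a b) = μ (α a) (α b))
    (hb1 : ∀ x v, φ (l x v) = l (α x) (φ v))
    (hb2 : ∀ v x, φ (r v x) = r (φ v) (α x))
    (hb3 : ∀ x y v, l (μ x y) (φ v) = l (α x) (l y v))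
    (hb4 : ∀ v x y, r (φ v) (μ x y) = r (r v x) (α y))
    (hb5 : ∀ x v y, l (α x) (r v y) = r (l x v) (α y))
    (T : M →ₗ[K] A) :
    ((∀ u, T (φ u) = α (T u)) ∧
     (∀ u v, μ (T u) (T v) = T (l (T u) v + r u (T v)))) ↔
    ((∀ p ∈ {p : A × M | ∃ u : M, p = (T u, u)},
      ∀ q ∈ {p : A × M | ∃ u : M, p = (T u, u)},
        sdMul μ l r p q ∈ {p : A × M | ∃ u : M, p = (T u, u)}) ∧
     (∀ p ∈ {p : A × M | ∃ u : M, p = (T u, u)},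
        sdMap α φ p ∈ {p : A × M | ∃ u : M, p = (T u, u)})) := by
  constructor
  · rintro ⟨h1, h2⟩
    constructor
    · rintro p ⟨u, rfl⟩ q ⟨v, rfl⟩
      exact ⟨l (T u) v + r u (T v), by simp [sdMul, h2 u v]⟩
    · rintro p ⟨u, rfl⟩
      exact ⟨φ u, by simp [sdMap, h1 u]⟩
  · rintro ⟨hc, hm⟩
    constructor
    · intro u
      obtain ⟨w, hw⟩ := hm (T u, u) ⟨u, rfl⟩
      simp only [sdMap, Prod.mk.injEq] at hw
      rw [hw.2, ← hw.1]
    · intro u v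
      obtain ⟨w, hw⟩ := hc (T u, u) ⟨u, rfl⟩ (T v, v) ⟨v, rfl⟩
      simp only [sdMul, Prod.mk.injEq] at hw
      rw [hw.2]; exact hw.1

end
end

section
/- Let (A,μ,α) be a Hom-associative algebra, (M,l,r,φ) an A-bimodule, and T: M → A a linear map commuting appropriately with the structure maps. Define T̂ ∈ End(A⊕M) by T̂(a,m) = (T(m), 0). Then T is an O-operator if and only if T̂ is a Rota-Baxter operator of weight 0 on the semi-direct product Hom-associative algebra A ⊕ M. -/
section

variable {K A M : Type*} [Field K] [AddCommGroup A] [Module K A]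
  [AddCommGroup M] [Module K M]

/-- The lift `T̂(a,m) = (T(m),0)` of a linear map `T : M → A`. -/
def hatT (T : M →ₗ[K] A) (p : A × M) : A × M := (T p.2, 0)

/-- given `T ∘ φ = α ∘ T`, the map `T` is an `𝒪`-operator iff
`T̂(a,m) = (T(m),0)` is a Rota-Baxter operator of weight `0` on the semi-direct
product Hom-associative algebra `A ⊕ M`. -/
theorem stmt_2 (μ : A →ₗ[K] A →ₗ[K] A) (α : A →ₗ[K] A)
    (l : A →ₗ[K] M →ₗ[K] M) (r : M →ₗ[K] A →ₗ[K] M) (φ : M →ₗ[K] M)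
    (hassoc : ∀ a b c : A, μ (α a) (μ b c) = μ (μ a b) (α c))
    (hmult : ∀ a b : A, α (μ a b) = μ (α a) (α b))
    (hb1 : ∀ x v, φ (l x v) = l (α x) (φ v))
    (hb2 : ∀ v x, φ (r v x) = r (φ v) (α x))
    (hb3 : ∀ x y v, l (μ x y) (φ v) = l (α x) (l y v))
    (hb4 : ∀ v x y, r (φ v) (μ x y) = r (r v x) (α y))
    (hb5 : ∀ x v y, l (α x) (r v y) = r (l x v) (α y))
    (T : M →ₗ[K] A)
    (hTφ : ∀ u, T (φ u) = α (T u)) :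
    (∀ u v, μ (T u) (T v) = T (l (T u) v + r u (T v))) ↔
    ((∀ p : A × M, hatT T (sdMap α φ p) = sdMap α φ (hatT T p)) ∧
     (∀ p q : A × M,
        sdMul μ l r (hatT T p) (hatT T q) =
          hatT T (sdMul μ l r (hatT T p) q + sdMul μ l r p (hatT T q)))) := by
  constructor
  · intro hO
    refine ⟨fun p => by simp [hatT, sdMap, hTφ], fun p q => ?_⟩
    simp only [sdMul, hatT, Prod.mk_add_mk, Prod.mk.injEq, map_zero,
      LinearMap.zero_apply, add_zero, zero_add, Prod.snd_add, Prod.fst_add]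
    refine ⟨?_, trivial⟩
    rw [hO]
  · rintro ⟨-, hRB⟩ u v
    have := hRB (0, u) (0, v)
    simp only [sdMul, hatT, Prod.mk_add_mk, Prod.mk.injEq, map_zero,
      LinearMap.zero_apply, add_zero, zero_add] at this
    rw [this.1]

end
end

section
/- A linear map T: M → A is an O-operator on a Hom-associative algebra (A,·,α) with respect to the bimodule (M,l,r,φ) if and only if the map N_T: A ⊕ M → A ⊕ M given by N_T(a,m) = (T(m), 0) is a Nijenhuis operator on the semi-direct product Hom-associative algebra A ⊕ M. -/
section

variable {K A M : Type*} [Field K] [AddCommGroup A] [Module K A]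
  [AddCommGroup M] [Module K M]

/-- The map `N_T(a,m) = (T(m),0)` on `A × M`. -/
def nijT (T : M →ₗ[K] A) (p : A × M) : A × M := (T p.2, 0)

/-- `T : M → A` is an `𝒪`-operator iff `N_T(a,m) = (T(m),0)` is a
Nijenhuis operator on the semi-direct product Hom-associative algebra `A ⊕ M`. -/
theorem stmt_3 (μ : A →ₗ[K] A →ₗ[K] A) (α : A →ₗ[K] A)
    (l : A →ₗ[K] M →ₗ[K] M) (r : M →ₗ[K] A →ₗ[K] M) (φ : M →ₗ[K] M)
    (hassoc : ∀ a b c : A, μ (α a) (μ b c) = μ (μ a b) (α c))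
    (hmult : ∀ a b : A, α (μ a b) = μ (α a) (α b))
    (hb1 : ∀ x v, φ (l x v) = l (α x) (φ v))
    (hb2 : ∀ v x, φ (r v x) = r (φ v) (α x))
    (hb3 : ∀ x y v, l (μ x y) (φ v) = l (α x) (l y v))
    (hb4 : ∀ v x y, r (φ v) (μ x y) = r (r v x) (α y))
    (hb5 : ∀ x v y, l (α x) (r v y) = r (l x v) (α y))
    (T : M →ₗ[K] A) :
    ((∀ u, T (φ u) = α (T u)) ∧
     (∀ u v, μ (T u) (T v) = T (l (T u) v + r u (T v)))) ↔
    ((∀ p : A × M, nijT T (sdMap α φ p) = sdMap α φ (nijT T p)) ∧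
     (∀ p q : A × M,
        sdMul μ l r (nijT T p) (nijT T q) =
          nijT T (sdMul μ l r (nijT T p) q + sdMul μ l r p (nijT T q)
            - nijT T (sdMul μ l r p q)))) := by
  constructor
  · rintro ⟨h1, h2⟩
    refine ⟨fun p => ?_, fun p q => ?_⟩
    · simp [nijT, sdMap, h1]
    · simp only [nijT, sdMul, Prod.mk_add_mk, Prod.mk_sub_mk, map_zero, map_add, map_sub,
        LinearMap.zero_apply, add_zero, zero_add, sub_zero]
      exact Prod.ext (by simpa using h2 p.2 q.2) rfl
  · rintro ⟨h1, h2⟩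
    refine ⟨fun u => ?_, fun u v => ?_⟩
    · have := h1 (0, u)
      simpa [nijT, sdMap, Prod.ext_iff] using this
    · have := h2 (0, u) (0, v)
      simpa [nijT, sdMul, Prod.ext_iff] using this

end
end

section
/- Let T: M → A be an O-operator on a Hom-associative algebra A with respect to the bimodule (M,l,r,φ). Then the operations u ≺ v = r(T(v))u and u ≻ v = l(T(u))v define a Hom-dendriform algebra structure on (M, φ). -/
/-- an `𝒪`-operator `T : M → A` induces a Hom-dendriform structure
on `(M,φ)` by `u ≺ v = r(u,T(v))` and `u ≻ v = l(T(u),v)`. -/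
theorem stmt_6 {K A M : Type*} [Field K] [AddCommGroup A] [Module K A]
    [AddCommGroup M] [Module K M]
    (μ : A →ₗ[K] A →ₗ[K] A) (α : A →ₗ[K] A)
    (l : A →ₗ[K] M →ₗ[K] M) (r : M →ₗ[K] A →ₗ[K] M) (φ : M →ₗ[K] M)
    (hassoc : ∀ a b c : A, μ (α a) (μ b c) = μ (μ a b) (α c))
    (hmult : ∀ a b : A, α (μ a b) = μ (α a) (α b))
    (hb1 : ∀ x v, φ (l x v) = l (α x) (φ v))
    (hb2 : ∀ v x, φ (r v x) = r (φ v) (α x))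
    (hb3 : ∀ x y v, l (μ x y) (φ v) = l (α x) (l y v))
    (hb4 : ∀ v x y, r (φ v) (μ x y) = r (r v x) (α y))
    (hb5 : ∀ x v y, l (α x) (r v y) = r (l x v) (α y))
    (T : M →ₗ[K] A)
    (hTφ : ∀ u, T (φ u) = α (T u))
    (hT : ∀ u v, μ (T u) (T v) = T (l (T u) v + r u (T v))) :
    (∀ x y z : M,
      r (r x (T y)) (T (φ z)) = r (φ x) (T (r y (T z) + l (T y) z))) ∧
    (∀ x y z : M,
      r (l (T x) y) (T (φ z)) = l (T (φ x)) (r y (T z))) ∧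
    (∀ x y z : M,
      l (T (r x (T y) + l (T x) y)) (φ z) = l (T (φ x)) (l (T y) z)) := by
  refine ⟨fun x y z => ?_, fun x y z => ?_, fun x y z => ?_⟩
  · rw [hTφ, ← hb4, show r y (T z) + l (T y) z = l (T y) z + r y (T z) from add_comm _ _,
      ← hT]
  · rw [hTφ, hTφ, ← hb5]
  · rw [show r x (T y) + l (T x) y = l (T x) y + r x (T y) from add_comm _ _,
      ← hT, hb3, hTφ]
end

section
/- Let T: M → A be an O-operator on a Hom-associative algebra A with respect to the bimodule (M,l,r,φ). Then the product u ⋆_T v = r(u,T(v)) + l(T(u),v) makes (M, ⋆_T, φ) a Hom-associative algebra. -/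
/-- an `𝒪`-operator `T : M → A` makes `(M, ⋆_T, φ)` a
Hom-associative algebra, where `u ⋆_T v = r(u,T(v)) + l(T(u),v)`. -/
theorem stmt_8 {K A M : Type*} [Field K] [AddCommGroup A] [Module K A]
    [AddCommGroup M] [Module K M]
    (μ : A →ₗ[K] A →ₗ[K] A) (α : A →ₗ[K] A)
    (l : A →ₗ[K] M →ₗ[K] M) (r : M →ₗ[K] A →ₗ[K] M) (φ : M →ₗ[K] M)
    (hassoc : ∀ a b c : A, μ (α a) (μ b c) = μ (μ a b) (α c))
    (hmult : ∀ a b : A, α (μ a b) = μ (α a) (α b))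
    (hb1 : ∀ x v, φ (l x v) = l (α x) (φ v))
    (hb2 : ∀ v x, φ (r v x) = r (φ v) (α x))
    (hb3 : ∀ x y v, l (μ x y) (φ v) = l (α x) (l y v))
    (hb4 : ∀ v x y, r (φ v) (μ x y) = r (r v x) (α y))
    (hb5 : ∀ x v y, l (α x) (r v y) = r (l x v) (α y))
    (T : M →ₗ[K] A)
    (hTφ : ∀ u, T (φ u) = α (T u))
    (hT : ∀ u v, μ (T u) (T v) = T (l (T u) v + r u (T v))) :
    ∀ u v w : M,
      (r (φ u) (T (r v (T w) + l (T v) w)) + l (T (φ u)) (r v (T w) + l (T v) w)) =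
      (r (r u (T v) + l (T u) v) (T (φ w)) + l (T (r u (T v) + l (T u) v)) (φ w)) := by
  intro u v w
  have e1 : T (r v (T w) + l (T v) w) = μ (T v) (T w) := by
    rw [hT v w, add_comm]
  have e2 : T (r u (T v) + l (T u) v) = μ (T u) (T v) := by
    rw [hT u v, add_comm]
  rw [e1, e2, hTφ, hTφ]
  simp only [map_add, LinearMap.add_apply, hb4, hb3, hb5 (T u) v (T w)]
  abel
end

section
/- Let A be a vector space with linear map α and let G = ⊕_{n≥1} V_n^α, where V_n^α is the space of n-linear maps f: A^⊗n → A commuting with α. For μ ∈ V_2^α, one has (1/2)[μ,μ]_α(x,y,z) = μ(μ(x,y),α(z)) − μ(α(x),μ(y,z)); hence μ defines a Hom-associative structure on A if and only if [μ,μ]_α = 0. -/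
section

variable {V : Type*} [AddCommGroup V]

/-- The twisted Gerstenhaber circle product `f ∘ g` of an `m`-cochain `f` with an
`n`-cochain `g` (cochains encoded as functions on sequences, using only the first
`m` resp. `n` entries), with structure map `β`:
`(f∘g)(a₁,…,a_{m+n−1}) = Σᵢ (−1)^{(i−1)(n−1)} f(β^{n−1}a₁,…, g(aᵢ,…),…, β^{n−1}a_{m+n−1})`. -/
def gcomp (β : V → V) (m n : ℕ) (f g : (ℕ → V) → V) : (ℕ → V) → V :=
  fun a => ∑ i ∈ Finset.range m, ((-1 : ℤ)) ^ (i * (n - 1)) •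
    f (fun j => if j < i then β^[n - 1] (a j)
        else if j = i then g (fun t => a (i + t))
        else β^[n - 1] (a (j + (n - 1))))

/-- The Gerstenhaber bracket `[f,g]_α = f∘g − (−1)^{(m−1)(n−1)} g∘f`. -/
def gbracket (β : V → V) (m n : ℕ) (f g : (ℕ → V) → V) : (ℕ → V) → V :=
  fun a => gcomp β m n f g a - ((-1 : ℤ)) ^ ((m - 1) * (n - 1)) • gcomp β n m g f a

end

/-- for a bilinear map `μ ∈ V₂^α`, one has
`(1/2)[μ,μ]_α(x,y,z) = μ(μ(x,y),α(z)) − μ(α(x),μ(y,z))`; hence `μ` is a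
Hom-associative structure on `A` iff `[μ,μ]_α = 0`. -/
theorem stmt_9 {K A : Type*} [Field K] [AddCommGroup A] [Module K A]
    (h2 : (2 : K) ≠ 0)
    (μ : A →ₗ[K] A →ₗ[K] A) (α : A →ₗ[K] A)
    (hμα : ∀ a b : A, α (μ a b) = μ (α a) (α b)) :
    (∀ a : ℕ → A,
      (2 : K)⁻¹ • gbracket (⇑α) 2 2 (fun b => μ (b 0) (b 1)) (fun b => μ (b 0) (b 1)) a
        = μ (μ (a 0) (a 1)) (α (a 2)) - μ (α (a 0)) (μ (a 1) (a 2))) ∧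
    ((∀ x y z : A, μ (μ x y) (α z) = μ (α x) (μ y z)) ↔
      (∀ a : ℕ → A,
        gbracket (⇑α) 2 2 (fun b => μ (b 0) (b 1)) (fun b => μ (b 0) (b 1)) a = 0)) := by
  have key : ∀ a : ℕ → A,
      gbracket (⇑α) 2 2 (fun b => μ (b 0) (b 1)) (fun b => μ (b 0) (b 1)) a
        = (2 : ℤ) • (μ (μ (a 0) (a 1)) (α (a 2)) - μ (α (a 0)) (μ (a 1) (a 2))) := by
    intro a
    simp [gbracket, gcomp, Finset.sum_range_succ, two_smul]
    abel
  have hsm : ∀ x : A, (2 : K)⁻¹ • ((2 : ℤ) • x) = x := by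
    intro x
    rw [show ((2:ℤ) • x) = (2:K) • x by rw [two_smul, two_smul], inv_smul_smul₀ h2]
  refine ⟨fun a => by rw [key a, hsm], ?_⟩
  constructor
  · intro h a
    rw [key a, h, sub_self, smul_zero]
  · intro h x y z
    have := h (fun n => if n = 0 then x else if n = 1 then y else z)
    rw [key] at this
    simp at this
    have h2' : (2:ℤ) • (μ (μ x y) (α z) - μ (α x) (μ y z)) = 0 := by
      simpa using this
    have hz : μ (μ x y) (α z) - μ (α x) (μ y z) = 0 := by
      have := congrArg (fun v => (2:K)⁻¹ • v) h2'
      simpa [hsm] using this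
    exact sub_eq_zero.mp hz
end

section
/- If f and g are homogeneous cochains on A₁⊕A₂ with bidegrees ||f|| = k_f|0 and ||g|| = k_g|0 (or both of bidegrees 0|k_f and 0|l_g), then their Gerstenhaber bracket [f,g]_α vanishes. -/
/-!
Each term of `f ∘ᵢ g` feeds a value of `g` into an argument slot of `f`. For cochains of
bidegree `k|0` the values lie in `A₁`, while the cochain only reads the `A₂`-components of its
arguments; so the slot receives `0`, and an additive slot sends that to `0`. The case `0|k` is
the same with `A₁` and `A₂` exchanged.
-/

theorem map_eq_zero_of_update_add {V W : Type*} [AddZeroClass V] [AddLeftCancelMonoid W]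
    (H : (ℕ → V) → W) (i : ℕ) (c : ℕ → V)
    (h : ∀ x y : V, H (Function.update c i (x + y)) =
      H (Function.update c i x) + H (Function.update c i y))
    (hc : c i = 0) : H c = 0 := by
  have h0 : H (Function.update c i 0) = 0 := by
    have := h 0 0
    rw [add_zero] at this
    exact left_eq_add.mp this
  rwa [← hc, Function.update_eq_self] at h0

section

variable {V : Type*} [AddCommGroup V]

theorem gcomp_eq_zero_of_range (β : V → V) (m n : ℕ) (f g : (ℕ → V) → V)
    (hfg : ∀ i < m, ∀ b : ℕ → V, b i ∈ Set.range g → f b = 0) (a : ℕ → V) :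
    gcomp β m n f g a = 0 := by
  refine Finset.sum_eq_zero fun i hi => ?_
  rw [hfg i (Finset.mem_range.mp hi) _ (by simp), smul_zero]

theorem gbracket_eq_zero_of_range (β : V → V) (m n : ℕ) (f g : (ℕ → V) → V)
    (hfg : ∀ i < m, ∀ b : ℕ → V, b i ∈ Set.range g → f b = 0)
    (hgf : ∀ i < n, ∀ b : ℕ → V, b i ∈ Set.range f → g b = 0) (a : ℕ → V) :
    gbracket β m n f g a = 0 := by
  rw [gbracket, gcomp_eq_zero_of_range β m n f g hfg, gcomp_eq_zero_of_range β n m g f hgf,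
    smul_zero, sub_zero]

end

theorem inl_lift_eq_zero_of_snd_eq_zero {A1 A2 : Type*} [AddLeftCancelMonoid A1]
    [AddZeroClass A2] (F : (ℕ → A2) → A1) (i : ℕ)
    (hF : ∀ (a : ℕ → A2) (x y : A2), F (Function.update a i (x + y)) =
      F (Function.update a i x) + F (Function.update a i y))
    (b : ℕ → A1 × A2) (hb : (b i).2 = 0) :
    (F (fun j => (b j).2), (0 : A2)) = 0 := by
  rw [map_eq_zero_of_update_add F i _ (hF _) hb, Prod.mk_zero_zero]

theorem inr_lift_eq_zero_of_fst_eq_zero {A1 A2 : Type*} [AddZeroClass A1]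
    [AddLeftCancelMonoid A2] (F : (ℕ → A1) → A2) (i : ℕ)
    (hF : ∀ (a : ℕ → A1) (x y : A1), F (Function.update a i (x + y)) =
      F (Function.update a i x) + F (Function.update a i y))
    (b : ℕ → A1 × A2) (hb : (b i).1 = 0) :
    ((0 : A1), F (fun j => (b j).1)) = 0 := by
  rw [map_eq_zero_of_update_add F i _ (hF _) hb, Prod.mk_zero_zero]

/-- if `f, g` are homogeneous (multilinear) cochains on `A₁ ⊕ A₂`
of bidegrees `k_f|0` and `k_g|0` (i.e. lifts of maps `A₂^{⊗(k−1)} → A₁`), or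
both of bidegrees `0|k_f`, `0|k_g` (lifts of maps `A₁^{⊗k} → A₂`), then their
Gerstenhaber bracket `[f,g]_α` vanishes.  Here `f` is the lift of an
`(m+1)`-multilinear map `F` and `g` of an `(n+1)`-multilinear map `G`, the
hypotheses `hF, hG, hF', hG'` encoding additivity in each argument slot. -/
theorem stmt_12 {K A1 A2 : Type*} [Field K] [AddCommGroup A1] [Module K A1]
    [AddCommGroup A2] [Module K A2]
    (α1 : A1 →ₗ[K] A1) (α2 : A2 →ₗ[K] A2) (m n : ℕ)
    (F : (ℕ → A2) → A1) (G : (ℕ → A2) → A1)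
    (F' : (ℕ → A1) → A2) (G' : (ℕ → A1) → A2)
    (hF : ∀ i < m + 1, ∀ (a : ℕ → A2) (x y : A2),
      F (Function.update a i (x + y)) =
        F (Function.update a i x) + F (Function.update a i y))
    (hG : ∀ i < n + 1, ∀ (a : ℕ → A2) (x y : A2),
      G (Function.update a i (x + y)) =
        G (Function.update a i x) + G (Function.update a i y))
    (hF' : ∀ i < m + 1, ∀ (a : ℕ → A1) (x y : A1),
      F' (Function.update a i (x + y)) =
        F' (Function.update a i x) + F' (Function.update a i y))
    (hG' : ∀ i < n + 1, ∀ (a : ℕ → A1) (x y : A1),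
      G' (Function.update a i (x + y)) =
        G' (Function.update a i x) + G' (Function.update a i y)) :
    (∀ a : ℕ → A1 × A2,
      gbracket (fun p => (α1 p.1, α2 p.2)) (m + 1) (n + 1)
        (fun b => (F (fun i => (b i).2), (0 : A2)))
        (fun b => (G (fun i => (b i).2), (0 : A2))) a = 0) ∧
    (∀ a : ℕ → A1 × A2,
      gbracket (fun p => (α1 p.1, α2 p.2)) (m + 1) (n + 1)
        (fun b => ((0 : A1), F' (fun i => (b i).1)))
        (fun b => ((0 : A1), G' (fun i => (b i).1))) a = 0) := by
  constructor
  · exact gbracket_eq_zero_of_range _ _ _ _ _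
      (fun i hi b ⟨_, hc⟩ => inl_lift_eq_zero_of_snd_eq_zero F i (hF i hi) b (by rw [← hc]))
      (fun i hi b ⟨_, hc⟩ => inl_lift_eq_zero_of_snd_eq_zero G i (hG i hi) b (by rw [← hc]))
  · exact gbracket_eq_zero_of_range _ _ _ _ _
      (fun i hi b ⟨_, hc⟩ => inr_lift_eq_zero_of_fst_eq_zero F' i (hF' i hi) b (by rw [← hc]))
      (fun i hi b ⟨_, hc⟩ => inr_lift_eq_zero_of_fst_eq_zero G' i (hG' i hi) b (by rw [← hc]))
end

section
/- Let T_t = T + tT₁ be a one-parameter formal deformation of an O-operator T: M → A, i.e., T₁φ = αT₁ and T_t(u)·T_t(v) = T_t(T_t(u)v + uT_t(v)) holds modulo t² for all u,v ∈ M. Then T₁ satisfies T(u)·T₁(v) + T₁(u)·T(v) = T(uT₁(v) + T₁(u)v) + T₁(uT(v) + T(u)v) for all u,v ∈ M, i.e., T₁ is a 1-cocycle for the cohomology of the O-operator T (d_T(T₁) = 0). -/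
/-- if `T_t = T + tT₁` is a one-parameter (infinitesimal/formal)
deformation of the `𝒪`-operator `T`, i.e. `T₁φ = αT₁` and
`T_t(u)·T_t(v) = T_t(T_t(u)v + uT_t(v))` (mod `t²`, encoded here by requiring
the deformation equation for every scalar `t`), then `T₁` is a `1`-cocycle:
`T(u)·T₁(v) + T₁(u)·T(v) = T(uT₁(v) + T₁(u)v) + T₁(uT(v) + T(u)v)`. -/
theorem stmt_17 {K A M : Type*} [Field K] [AddCommGroup A] [Module K A]
    [AddCommGroup M] [Module K M]
    (h2 : (2 : K) ≠ 0)
    (μ : A →ₗ[K] A →ₗ[K] A) (α : A →ₗ[K] A)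
    (l : A →ₗ[K] M →ₗ[K] M) (r : M →ₗ[K] A →ₗ[K] M) (φ : M →ₗ[K] M)
    (hassoc : ∀ a b c : A, μ (α a) (μ b c) = μ (μ a b) (α c))
    (hmult : ∀ a b : A, α (μ a b) = μ (α a) (α b))
    (hb1 : ∀ x v, φ (l x v) = l (α x) (φ v))
    (hb2 : ∀ v x, φ (r v x) = r (φ v) (α x))
    (hb3 : ∀ x y v, l (μ x y) (φ v) = l (α x) (l y v))
    (hb4 : ∀ v x y, r (φ v) (μ x y) = r (r v x) (α y))
    (hb5 : ∀ x v y, l (α x) (r v y) = r (l x v) (α y))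
    (T T₁ : M →ₗ[K] A)
    (hTφ : ∀ u, T (φ u) = α (T u))
    (hT : ∀ u v, μ (T u) (T v) = T (l (T u) v + r u (T v)))
    (hT₁φ : ∀ u, T₁ (φ u) = α (T₁ u))
    (hdef : ∀ (t : K) (u v : M),
      μ (T u + t • T₁ u) (T v + t • T₁ v) =
        T (l (T u + t • T₁ u) v + r u (T v + t • T₁ v))
          + t • T₁ (l (T u + t • T₁ u) v + r u (T v + t • T₁ v))) :
    ∀ u v : M,
      μ (T u) (T₁ v) + μ (T₁ u) (T v) =
        T (r u (T₁ v) + l (T₁ u) v) + T₁ (r u (T v) + l (T u) v) := by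
  intro u v
  have e1 := hdef 1 u v
  have e2 := hdef (-1) u v
  simp only [one_smul, neg_smul, map_add, map_neg, map_smul, LinearMap.add_apply,
    LinearMap.neg_apply, LinearMap.smul_apply, neg_neg, smul_neg] at e1 e2
  have key : (2 : K) • (μ (T u) (T₁ v) + μ (T₁ u) (T v)) =
      (2 : K) • (T (r u (T₁ v) + l (T₁ u) v) + T₁ (r u (T v) + l (T u) v)) := by
    have h := congrArg₂ (· - ·) e1 e2
    simp only [map_add, map_neg, map_smul] at h ⊢
    rw [two_smul, two_smul]
    abel_nf at h ⊢
    linear_combination (norm := abel) h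
  exact smul_right_injective A h2 key
end
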